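/- Let Γ ∈ ℝ, let K : [0,1] → ℝ be continuous, and let h : ℝ → [0,1] be a Lipschitz continuous function. Then there exists a unique continuous function ω : [0,∞) → ℝ satisfying the mollified precipitation equation ω(x) = Γ − x² ∫₀¹ K(θ) h(ω(xθ)) dθ for every x ≥ 0 (in particular ω(0) = Γ). -/

import Mathlib

open MeasureTheory Set Filter Topology

namespace MEW

abbrev E := BoundedContinuousFunction (Set.Ici (0:ℝ)) ℝ

noncomputable def wfun (lam : ℝ) (g : E) (y : ℝ) : ℝ :=
  Real.exp (lam * y ^ 2) * g ⟨max y 0, Set.mem_Ici.mpr (le_max_right _ _)⟩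

lemma wfun_cont (lam : ℝ) (g : E) : Continuous (wfun lam g) := by
  apply Continuous.mul
  · exact Real.continuous_exp.comp (continuous_const.mul (continuous_pow 2))
  · exact g.continuous.comp (Continuous.subtype_mk (continuous_id.max continuous_const) _)

lemma wfun_of_nonneg (lam : ℝ) (g : E) {y : ℝ} (hy : 0 ≤ y) :
    wfun lam g y = Real.exp (lam * y ^ 2) * g ⟨y, hy⟩ := by
  simp only [wfun, max_eq_left hy]

lemma wfun_dist (lam : ℝ) (g g' : E) (y : ℝ) :
    |wfun lam g y - wfun lam g' y| ≤ Real.exp (lam * y ^ 2) * dist g g' := by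
  rw [wfun, wfun, ← mul_sub, abs_mul, abs_of_pos (Real.exp_pos _)]
  have := BoundedContinuousFunction.dist_coe_le_dist
    (f := g) (g := g') (⟨max y 0, Set.mem_Ici.mpr (le_max_right _ _)⟩ : Set.Ici (0:ℝ))
  rw [Real.dist_eq] at this
  exact mul_le_mul_of_nonneg_left this (Real.exp_pos _).le

noncomputable def Tmap (Γ lam : ℝ) (K h : ℝ → ℝ) (g : E) (x : ℝ) : ℝ :=
  Real.exp (-(lam * x ^ 2)) *
    (Γ - x ^ 2 * ∫ θ in (0:ℝ)..1, K θ * h (wfun lam g (x * θ)))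

section

variable {Γ lam C : ℝ} {K h : ℝ → ℝ} {L : NNReal}

lemma intInt (hKcont : ContinuousOn K (Icc 0 1)) (hLip : LipschitzWith L h)
    {f : ℝ → ℝ} (hf : Continuous f) :
    IntervalIntegrable (fun θ => K θ * h (f θ)) volume 0 1 :=
  (hKcont.mul ((hLip.continuous.comp hf).continuousOn)).intervalIntegrable_of_Icc zero_le_one

lemma int_bound (hC : ∀ θ ∈ Icc (0:ℝ) 1, |K θ| ≤ C) (hh1 : ∀ t, |h t| ≤ 1)
    (f : ℝ → ℝ) : |∫ θ in (0:ℝ)..1, K θ * h (f θ)| ≤ C := by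
  have hC0 : 0 ≤ C := le_trans (abs_nonneg _) (hC 0 (by norm_num))
  have := intervalIntegral.norm_integral_le_of_norm_le_const (C := C)
    (f := fun θ => K θ * h (f θ)) (a := 0) (b := 1) ?_
  · simpa using this
  · intro θ hθ
    rw [uIoc_of_le zero_le_one] at hθ
    have h1 : |K θ| ≤ C := hC θ (Ioc_subset_Icc_self hθ)
    calc ‖K θ * h (f θ)‖ = |K θ| * |h (f θ)| := abs_mul _ _
      _ ≤ C * 1 := mul_le_mul h1 (hh1 _) (abs_nonneg _) hC0
      _ = C := mul_one C

lemma weight_bound (hlam : 0 < lam) (x : ℝ) :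
    x ^ 2 * Real.exp (-(lam * x ^ 2)) ≤ 1 / lam := by
  have he := Real.add_one_le_exp (lam * x ^ 2)
  have hp := Real.exp_pos (lam * x ^ 2)
  rw [Real.exp_neg, ← div_eq_mul_inv, div_le_div_iff₀ hp hlam]
  nlinarith [sq_nonneg x]

lemma Tmap_bound (hlam : 0 < lam) (hC0 : 0 ≤ C) {S x : ℝ} (hS : |S| ≤ C) :
    |Real.exp (-(lam * x ^ 2)) * (Γ - x ^ 2 * S)| ≤ |Γ| + C / lam := by
  have hp := Real.exp_pos (-(lam * x ^ 2))
  have he1 : Real.exp (-(lam * x ^ 2)) ≤ 1 := by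
    rw [Real.exp_le_one_iff]
    nlinarith [sq_nonneg x]
  have hw := weight_bound hlam x
  have habs : |Γ - x ^ 2 * S| ≤ |Γ| + x ^ 2 * |S| := by
    calc |Γ - x ^ 2 * S| ≤ |Γ| + |x ^ 2 * S| := abs_sub _ _
      _ = |Γ| + x ^ 2 * |S| := by rw [abs_mul, abs_of_nonneg (sq_nonneg x)]
  rw [abs_mul, abs_of_pos hp]
  have hS0 : 0 ≤ |S| := abs_nonneg _
  have hG0 : 0 ≤ |Γ| := abs_nonneg _
  have hx2 : (0:ℝ) ≤ x ^ 2 := sq_nonneg x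
  have key : Real.exp (-(lam * x ^ 2)) * |Γ - x ^ 2 * S|
      ≤ Real.exp (-(lam * x ^ 2)) * (|Γ| + x ^ 2 * |S|) :=
    mul_le_mul_of_nonneg_left habs hp.le
  have key2 : Real.exp (-(lam * x ^ 2)) * (|Γ| + x ^ 2 * |S|)
      ≤ |Γ| + (1 / lam) * C := by
    have h1 : Real.exp (-(lam * x ^ 2)) * |Γ| ≤ |Γ| :=
      by nlinarith
    have h2 : Real.exp (-(lam * x ^ 2)) * (x ^ 2 * |S|) ≤ (1 / lam) * C := by
      have : x ^ 2 * Real.exp (-(lam * x ^ 2)) * |S| ≤ (1 / lam) * C :=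
        mul_le_mul hw hS hS0 (by positivity)
      nlinarith
    nlinarith
  calc Real.exp (-(lam * x ^ 2)) * |Γ - x ^ 2 * S| ≤ |Γ| + (1 / lam) * C := key.trans key2
    _ = |Γ| + C / lam := by ring

lemma Tmap_cont (hKcont : ContinuousOn K (Icc 0 1)) (hC : ∀ θ ∈ Icc (0:ℝ) 1, |K θ| ≤ C)
    (hh1 : ∀ t, |h t| ≤ 1) (hLip : LipschitzWith L h) (Γ lam : ℝ) (g : E) :
    Continuous fun x => Tmap Γ lam K h g x := by
  apply Continuous.mul
  · exact Real.continuous_exp.comp (continuous_const.mul (continuous_pow 2)).neg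
  refine continuous_const.sub (Continuous.mul (continuous_pow 2) ?_)
  apply intervalIntegral.continuous_of_dominated_interval (bound := fun θ => |K θ|)
  · intro x
    apply AEStronglyMeasurable.mul
    · refine (hKcont.mono ?_).aestronglyMeasurable ?_
      · rw [uIoc_of_le (zero_le_one (α := ℝ))]; exact Ioc_subset_Icc_self
      · rw [uIoc_of_le (zero_le_one (α := ℝ))]; exact measurableSet_Ioc
    · exact (hLip.continuous.comp
        ((wfun_cont lam g).comp (continuous_const.mul continuous_id))).aestronglyMeasurable
  · intro x
    refine Eventually.of_forall fun θ _ => ?_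
    calc ‖K θ * h (wfun lam g (x * θ))‖ = |K θ| * |h (wfun lam g (x * θ))| := abs_mul _ _
      _ ≤ |K θ| * 1 := mul_le_mul_of_nonneg_left (hh1 _) (abs_nonneg _)
      _ = |K θ| := mul_one _
  · exact (hKcont.abs).intervalIntegrable_of_Icc zero_le_one
  · refine Eventually.of_forall fun θ _ => ?_
    exact continuous_const.mul
      (hLip.continuous.comp ((wfun_cont lam g).comp (continuous_mul_right θ)))

noncomputable def Phi (hKcont : ContinuousOn K (Icc 0 1))
    (hC : ∀ θ ∈ Icc (0:ℝ) 1, |K θ| ≤ C) (hC0 : 0 ≤ C)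
    (hh1 : ∀ t, |h t| ≤ 1) (hLip : LipschitzWith L h) (hlam : 0 < lam)
    (Γ : ℝ) (g : E) : E :=
  BoundedContinuousFunction.ofNormedAddCommGroup
    (fun p : Set.Ici (0:ℝ) => Tmap Γ lam K h g p)
    ((Tmap_cont hKcont hC hh1 hLip Γ lam g).comp continuous_subtype_val)
    (|Γ| + C / lam)
    (fun p => Tmap_bound hlam hC0 (int_bound hC hh1 _))

lemma Phi_apply (hKcont : ContinuousOn K (Icc 0 1))
    (hC : ∀ θ ∈ Icc (0:ℝ) 1, |K θ| ≤ C) (hC0 : 0 ≤ C)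
    (hh1 : ∀ t, |h t| ≤ 1) (hLip : LipschitzWith L h) (hlam : 0 < lam)
    (Γ : ℝ) (g : E) (p : Set.Ici (0:ℝ)) :
    Phi hKcont hC hC0 hh1 hLip hlam Γ g p = Tmap Γ lam K h g p := rfl

lemma integral_exp_mul' {c : ℝ} (hc : c ≠ 0) :
    ∫ θ in (0:ℝ)..1, Real.exp (c * θ) = (Real.exp c - 1) / c := by
  rw [intervalIntegral.integral_comp_mul_left (fun u => Real.exp u) hc]
  simp [integral_exp, mul_comm, div_eq_inv_mul]

lemma Tmap_contract (hKcont : ContinuousOn K (Icc 0 1))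
    (hC : ∀ θ ∈ Icc (0:ℝ) 1, |K θ| ≤ C) (hC0 : 0 ≤ C)
    (hh1 : ∀ t, |h t| ≤ 1) (hLip : LipschitzWith L h) (hlam : 0 < lam)
    (Γ : ℝ) (g g' : E) {x : ℝ} (hx : 0 ≤ x) :
    |Tmap Γ lam K h g x - Tmap Γ lam K h g' x| ≤ (C * L / lam) * dist g g' := by
  rcases eq_or_lt_of_le hx with hx0 | hx0
  · rw [← hx0]
    simp only [Tmap]
    norm_num
    positivity
  · set d := dist g g' with hd
    have hd0 : 0 ≤ d := dist_nonneg
    have hcpos : 0 < lam * x ^ 2 := by positivity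
    have hint : ∀ gg : E,
        IntervalIntegrable (fun θ => K θ * h (wfun lam gg (x * θ))) volume 0 1 :=
      fun gg => intInt hKcont hLip ((wfun_cont lam gg).comp (continuous_const.mul continuous_id))
    have key : |(∫ θ in (0:ℝ)..1, K θ * h (wfun lam g (x * θ))) -
        ∫ θ in (0:ℝ)..1, K θ * h (wfun lam g' (x * θ))|
        ≤ C * ↑L * d * ((Real.exp (lam * x ^ 2) - 1) / (lam * x ^ 2)) := by
      rw [← intervalIntegral.integral_sub (hint g) (hint g')]
      have hb : ∀ θ ∈ Set.uIoc (0:ℝ) 1,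
          ‖K θ * h (wfun lam g (x * θ)) - K θ * h (wfun lam g' (x * θ))‖
          ≤ C * ↑L * d * Real.exp (lam * x ^ 2 * θ) := by
        intro θ hθ
        rw [uIoc_of_le (zero_le_one (α := ℝ))] at hθ
        have hθ0 : 0 ≤ θ := hθ.1.le
        have hθ1 : θ ≤ 1 := hθ.2
        have h1 : |K θ| ≤ C := hC θ (Ioc_subset_Icc_self hθ)
        have h2 : |h (wfun lam g (x * θ)) - h (wfun lam g' (x * θ))|
            ≤ ↑L * |wfun lam g (x * θ) - wfun lam g' (x * θ)| := by
          have := hLip.dist_le_mul (wfun lam g (x * θ)) (wfun lam g' (x * θ))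
          rwa [Real.dist_eq, Real.dist_eq] at this
        have h3 := wfun_dist lam g g' (x * θ)
        have h5 : Real.exp (lam * (x * θ) ^ 2) ≤ Real.exp (lam * x ^ 2 * θ) := by
          apply Real.exp_le_exp.mpr
          have hθ2 : θ ^ 2 ≤ θ := by nlinarith
          nlinarith [mul_nonneg hcpos.le (sub_nonneg.mpr hθ2)]
        have h6 : |h (wfun lam g (x * θ)) - h (wfun lam g' (x * θ))|
            ≤ ↑L * (Real.exp (lam * x ^ 2 * θ) * d) := by
          refine h2.trans (mul_le_mul_of_nonneg_left ?_ L.2)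
          exact h3.trans (mul_le_mul_of_nonneg_right h5 hd0)
        rw [← mul_sub]
        calc ‖K θ * (h (wfun lam g (x * θ)) - h (wfun lam g' (x * θ)))‖
            = |K θ| * |h (wfun lam g (x * θ)) - h (wfun lam g' (x * θ))| := abs_mul _ _
          _ ≤ C * (↑L * (Real.exp (lam * x ^ 2 * θ) * d)) :=
              mul_le_mul h1 h6 (abs_nonneg _) hC0
          _ = C * ↑L * d * Real.exp (lam * x ^ 2 * θ) := by ring
      have hb2 : IntervalIntegrable (fun θ => C * ↑L * d * Real.exp (lam * x ^ 2 * θ)) volume 0 1 :=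
        (continuous_const.mul (Real.continuous_exp.comp
          (continuous_const.mul continuous_id))).intervalIntegrable 0 1
      have hle := intervalIntegral.norm_integral_le_of_norm_le (μ := volume)
        (f := fun θ => K θ * h (wfun lam g (x * θ)) - K θ * h (wfun lam g' (x * θ)))
        (a := 0) (b := 1)
        zero_le_one (Eventually.of_forall fun θ hθ => hb θ (by rwa [uIoc_of_le (zero_le_one (α := ℝ))])) hb2
      have hval : ∫ θ in (0:ℝ)..1, C * ↑L * d * Real.exp (lam * x ^ 2 * θ)
          = C * ↑L * d * ((Real.exp (lam * x ^ 2) - 1) / (lam * x ^ 2)) := by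
        rw [intervalIntegral.integral_const_mul, integral_exp_mul' hcpos.ne']
      rw [hval] at hle
      exact hle
    have expand : Tmap Γ lam K h g x - Tmap Γ lam K h g' x
        = Real.exp (-(lam * x ^ 2)) * (x ^ 2 *
          ((∫ θ in (0:ℝ)..1, K θ * h (wfun lam g' (x * θ))) -
           ∫ θ in (0:ℝ)..1, K θ * h (wfun lam g (x * θ)))) := by
      rw [Tmap, Tmap]; ring
    rw [expand, abs_mul, abs_mul, abs_of_pos (Real.exp_pos _), abs_of_nonneg (sq_nonneg x),
      abs_sub_comm]
    have step : Real.exp (-(lam * x ^ 2)) * (x ^ 2 *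
        (C * ↑L * d * ((Real.exp (lam * x ^ 2) - 1) / (lam * x ^ 2))))
        = (C * ↑L * d / lam) * (1 - Real.exp (-(lam * x ^ 2))) := by
      rw [Real.exp_neg]
      have h1 : Real.exp (lam * x ^ 2) ≠ 0 := (Real.exp_pos _).ne'
      have h2 : lam * x ^ 2 ≠ 0 := hcpos.ne'
      have h3 : lam ≠ 0 := hlam.ne'
      field_simp
    have hmid : Real.exp (-(lam * x ^ 2)) * (x ^ 2 *
        |(∫ θ in (0:ℝ)..1, K θ * h (wfun lam g (x * θ))) -
         ∫ θ in (0:ℝ)..1, K θ * h (wfun lam g' (x * θ))|)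
        ≤ (C * ↑L * d / lam) * (1 - Real.exp (-(lam * x ^ 2))) := by
      rw [← step]
      exact mul_le_mul_of_nonneg_left (mul_le_mul_of_nonneg_left key (sq_nonneg x))
        (Real.exp_pos _).le
    refine hmid.trans ?_
    have hexp : 0 < Real.exp (-(lam * x ^ 2)) := Real.exp_pos _
    have hq0 : 0 ≤ C * ↑L * d / lam := by positivity
    have h8 : C * ↑L * d / lam * (1 - Real.exp (-(lam * x ^ 2))) ≤ C * ↑L * d / lam * 1 :=
      mul_le_mul_of_nonneg_left (by linarith) hq0
    have h9 : C * ↑L * d / lam * 1 = C * ↑L / lam * d := by ring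
    linarith

end

end MEW

/-- For a Lipschitz function h with values in [0,1], the mollified
precipitation equation ω(x) = Γ - x² ∫₀¹ K(θ) h(ω(xθ)) dθ has a solution,
continuous on [0,∞), which is unique (on [0,∞)). -/
theorem mollified_equation_wellposed
    (Γ : ℝ) (K : ℝ → ℝ) (hKcont : ContinuousOn K (Icc 0 1))
    (h : ℝ → ℝ) (L : NNReal) (hLip : LipschitzWith L h)
    (hrange : ∀ t, h t ∈ Icc (0:ℝ) 1) :
    ∃ ω : ℝ → ℝ,
      (ContinuousOn ω (Ici 0) ∧
        ∀ x ∈ Ici (0:ℝ),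
          ω x = Γ - x ^ 2 * ∫ θ in (0:ℝ)..1, K θ * h (ω (x * θ))) ∧
      (∀ ω' : ℝ → ℝ,
        (ContinuousOn ω' (Ici 0) ∧
          ∀ x ∈ Ici (0:ℝ),
            ω' x = Γ - x ^ 2 * ∫ θ in (0:ℝ)..1, K θ * h (ω' (x * θ))) →
        ∀ x ∈ Ici (0:ℝ), ω' x = ω x) := by
  obtain ⟨C₀, hC₀⟩ := isCompact_Icc.exists_bound_of_continuousOn hKcont
  set C := max C₀ 0 with hCdef
  have hC0 : 0 ≤ C := le_max_right _ _
  have hC : ∀ θ ∈ Icc (0:ℝ) 1, |K θ| ≤ C :=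
    fun θ hθ => le_trans (by simpa using hC₀ θ hθ) (le_max_left _ _)
  have hh1 : ∀ t, |h t| ≤ 1 :=
    fun t => abs_le.mpr ⟨by linarith [(hrange t).1], (hrange t).2⟩
  set lam := C * ↑L + 1 with hlamdef
  have hlam : 0 < lam := by positivity
  set q : NNReal := ⟨C * ↑L / lam, by positivity⟩ with hqdef
  have hq1 : q < 1 := by
    rw [← NNReal.coe_lt_coe]
    show C * ↑L / lam < 1
    rw [div_lt_one hlam, hlamdef]
    linarith
  set Φ : MEW.E → MEW.E := MEW.Phi hKcont hC hC0 hh1 hLip hlam Γ with hΦdef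
  have hΦ : ContractingWith q Φ := by
    refine ⟨hq1, LipschitzWith.of_dist_le_mul fun g g' => ?_⟩
    rw [BoundedContinuousFunction.dist_le (by positivity)]
    intro p
    have := MEW.Tmap_contract hKcont hC hC0 hh1 hLip hlam Γ g g' p.2
    rw [Real.dist_eq]
    exact this
  set g : MEW.E := ContractingWith.fixedPoint Φ hΦ with hgdef
  have hfix : Φ g = g := hΦ.fixedPoint_isFixedPt
  have hsol : ∀ x ∈ Ici (0:ℝ), MEW.wfun lam g x
      = Γ - x ^ 2 * ∫ θ in (0:ℝ)..1, K θ * h (MEW.wfun lam g (x * θ)) := by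
    intro x hx
    have h1 : (g ⟨x, hx⟩ : ℝ) = MEW.Tmap Γ lam K h g x := by
      conv_lhs => rw [← hfix]
      rfl
    rw [MEW.wfun_of_nonneg lam g hx, h1, MEW.Tmap, ← mul_assoc, ← Real.exp_add]
    rw [add_neg_cancel, Real.exp_zero, one_mul]
  refine ⟨MEW.wfun lam g, ⟨(MEW.wfun_cont lam g).continuousOn, hsol⟩, ?_⟩
  rintro ω' ⟨hω'c, hω'eq⟩ x hx
  set g' : MEW.E := BoundedContinuousFunction.ofNormedAddCommGroup
    (fun p : Set.Ici (0:ℝ) => Real.exp (-(lam * (p:ℝ) ^ 2)) * ω' p)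
    (by have := (Real.continuous_exp.comp
      (((continuous_const (y := lam)).mul (continuous_subtype_val.pow 2)).neg)).mul hω'c.restrict; exact this)
    (|Γ| + C / lam)
    (fun p => by
      show ‖Real.exp (-(lam * (p:ℝ) ^ 2)) * ω' ↑p‖ ≤ |Γ| + C / lam
      rw [hω'eq p p.2]
      exact MEW.Tmap_bound hlam hC0 (MEW.int_bound hC hh1 _)) with hg'def
  have hg'apply : ∀ p : Set.Ici (0:ℝ),
      (g' p : ℝ) = Real.exp (-(lam * (p:ℝ) ^ 2)) * ω' p := fun p => rfl
  have hfix' : Φ g' = g' := by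
    ext p
    rw [MEW.Phi_apply, hg'apply]
    have hcongr : (∫ θ in (0:ℝ)..1, K θ * h (MEW.wfun lam g' ((p:ℝ) * θ)))
        = ∫ θ in (0:ℝ)..1, K θ * h (ω' ((p:ℝ) * θ)) := by
      apply intervalIntegral.integral_congr
      intro θ hθ
      rw [uIcc_of_le (zero_le_one (α := ℝ))] at hθ
      have hxθ : 0 ≤ (p:ℝ) * θ := mul_nonneg p.2 hθ.1
      have : MEW.wfun lam g' ((p:ℝ) * θ) = ω' ((p:ℝ) * θ) := by
        rw [MEW.wfun_of_nonneg lam g' hxθ, hg'apply, ← mul_assoc, ← Real.exp_add,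
          add_neg_cancel, Real.exp_zero, one_mul]
      show K θ * h (MEW.wfun lam g' ((p:ℝ) * θ)) = K θ * h (ω' ((p:ℝ) * θ))
      rw [this]
    rw [MEW.Tmap, hcongr, ← hω'eq p p.2]
  have hgg' : g' = g := hΦ.fixedPoint_unique hfix'
  have h1 : Real.exp (-(lam * x ^ 2)) * ω' x = (g ⟨x, hx⟩ : ℝ) := by
    rw [← hgg']
    exact (hg'apply ⟨x, hx⟩).symm
  have h2 : MEW.wfun lam g x = Real.exp (lam * x ^ 2) * g ⟨x, hx⟩ :=
    MEW.wfun_of_nonneg lam g hx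
  rw [h2, ← h1, ← mul_assoc, ← Real.exp_add, add_neg_cancel, Real.exp_zero, one_mul]
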